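/- Let m ≥ 1 and φ ∈ ℝ, and let A = {(cos(2πk/m + φ), sin(2πk/m + φ), 0) : k = 0, …, m-1} ⊂ ℍ¹ be the vertex set of a regular m-gon inscribed in the circle S¹ × {0}. Then the counting measure on A is uniformly distributed on (ℍ¹, d_H): for all x, y ∈ A and all r > 0, the number of points of A in the closed d_H-ball B(x,r) equals the number of points of A in B(y,r). -/
import Mathlib


open MeasureTheory Set ENNReal Real

noncomputable section

/-- The first Heisenberg group `ℍ¹`, identified with `ℝ³`. -/
abbrev H1 := ℝ × ℝ × ℝ

/-- The group law of `ℍ¹`: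
`x·y = (x₁+y₁, x₂+y₂, x₃+y₃ - 2(x₁y₂ - x₂y₁))`. -/
def hmul1 (x y : H1) : H1 :=
  (x.1 + y.1, x.2.1 + y.2.1, x.2.2 + y.2.2 - 2 * (x.1 * y.2.1 - x.2.1 * y.1))

/-- The group inverse of `ℍ¹`, `x⁻¹ = -x`. -/
def hinv1 (x : H1) : H1 := (-x.1, -x.2.1, -x.2.2)

/-- The Korányi norm `‖x‖_H = ((x₁²+x₂²)² + x₃²)^{1/4}`. -/
def KNorm1 (x : H1) : ℝ := ((x.1 ^ 2 + x.2.1 ^ 2) ^ 2 + x.2.2 ^ 2) ^ ((1 : ℝ) / 4)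

/-- The Korányi metric `d_H(x,y) = ‖x⁻¹·y‖_H` on `ℍ¹`. -/
def dH1 (x y : H1) : ℝ := KNorm1 (hmul1 (hinv1 x) y)

/-- The closed `d_H`-ball of center `x` and radius `r`. -/
def ball1 (x : H1) (r : ℝ) : Set H1 := {y | dH1 x y ≤ r}

/-- The vertex set of a regular `m`-gon inscribed in the circle `S¹ × {0} ⊆ ℍ¹`. -/
def polygonA (m : ℕ) (φ : ℝ) : Set H1 :=
  {p | ∃ k : ℕ, k < m ∧
    p = (Real.cos (2 * Real.pi * k / m + φ), Real.sin (2 * Real.pi * k / m + φ), 0)}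

/-- Rotation by angle `θ` in the horizontal plane. -/
def rot1 (θ : ℝ) (p : H1) : H1 :=
  (Real.cos θ * p.1 - Real.sin θ * p.2.1, Real.sin θ * p.1 + Real.cos θ * p.2.1, p.2.2)

lemma rot1_rot1 (θ ψ : ℝ) (p : H1) : rot1 θ (rot1 ψ p) = rot1 (θ + ψ) p := by
  obtain ⟨a, b, c⟩ := p
  simp only [rot1, Real.cos_add, Real.sin_add, Prod.mk.injEq, and_true]
  exact ⟨by ring, by ring⟩

lemma rot1_zero (p : H1) : rot1 0 p = p := by
  obtain ⟨a, b, c⟩ := p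
  simp [rot1]

lemma rot1_injective (θ : ℝ) : Function.Injective (rot1 θ) := by
  intro p q h
  have h2 := congrArg (rot1 (-θ)) h
  rwa [rot1_rot1, rot1_rot1, neg_add_cancel, rot1_zero, rot1_zero] at h2

/-- Rotations are `d_H`-isometries. -/
lemma rot1_dH (θ : ℝ) (a b : H1) : dH1 (rot1 θ a) (rot1 θ b) = dH1 a b := by
  obtain ⟨a1, a2, a3⟩ := a
  obtain ⟨b1, b2, b3⟩ := b
  have hc := Real.sin_sq_add_cos_sq θ
  simp only [dH1, KNorm1, hmul1, hinv1, rot1]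
  congr 1
  set c := Real.cos θ
  set s := Real.sin θ
  linear_combination
    (((b1 - a1) ^ 2 + (b2 - a2) ^ 2) *
        (((c * (b1 - a1) - s * (b2 - a2)) ^ 2 + (s * (b1 - a1) + c * (b2 - a2)) ^ 2) +
          ((b1 - a1) ^ 2 + (b2 - a2) ^ 2)) +
      2 * (a1 * b2 - a2 * b1) *
        ((b3 - a3 + 2 * ((c * a1 - s * a2) * (s * b1 + c * b2) -
            (s * a1 + c * a2) * (c * b1 - s * b2))) +
          (b3 - a3 + 2 * (a1 * b2 - a2 * b1)))) * hc

lemma rot1_point (θ α : ℝ) :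
    rot1 θ (Real.cos α, Real.sin α, (0 : ℝ)) = (Real.cos (θ + α), Real.sin (θ + α), (0 : ℝ)) := by
  unfold rot1
  rw [Real.cos_add, Real.sin_add]

lemma angle_congr (m : ℕ) (hm : 1 ≤ m) (φ : ℝ) (a b : ℤ) (h : a % (m : ℤ) = b % (m : ℤ)) :
    Real.cos (2 * Real.pi * a / m + φ) = Real.cos (2 * Real.pi * b / m + φ) ∧
    Real.sin (2 * Real.pi * a / m + φ) = Real.sin (2 * Real.pi * b / m + φ) := by
  have hmod : b ≡ a [ZMOD (m : ℤ)] := (show Int.ModEq (m : ℤ) a b from h).symm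
  have hd : (m : ℤ) ∣ a - b := hmod.dvd
  obtain ⟨q, hq⟩ := hd
  have hm0 : (m : ℝ) ≠ 0 := by positivity
  have key : 2 * Real.pi * a / m + φ = (2 * Real.pi * b / m + φ) + q * (2 * Real.pi) := by
    have ha' : a = b + (m : ℤ) * q := by linarith
    have ha : (a : ℝ) = b + q * m := by rw [ha']; push_cast; ring
    rw [ha]
    field_simp
    ring
  rw [key, Real.cos_add_int_mul_two_pi, Real.sin_add_int_mul_two_pi]
  exact ⟨rfl, rfl⟩

/-- Rotating by a multiple of `2π/m` maps the polygon into itself. -/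
lemma rot1_mem (m : ℕ) (hm : 1 ≤ m) (φ : ℝ) (a b : ℕ) (hb : b ≤ m) :
    ∀ p ∈ polygonA m φ, rot1 (2 * Real.pi * a / m - 2 * Real.pi * b / m) p ∈ polygonA m φ := by
  rintro p ⟨j, hj, rfl⟩
  refine ⟨(j + a + (m - b)) % m, Nat.mod_lt _ (by omega), ?_⟩
  rw [rot1_point]
  have hm0 : (m : ℝ) ≠ 0 := by positivity
  have harg : 2 * Real.pi * a / m - 2 * Real.pi * b / m + (2 * Real.pi * j / m + φ)
      = 2 * Real.pi * ((j : ℤ) + a - b : ℤ) / m + φ := by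
    push_cast
    field_simp
    ring
  have hcongr := angle_congr m hm φ ((j : ℤ) + a - b) (((j + a + (m - b)) % m : ℕ) : ℤ)
    (by
      have e1 : (((j + a + (m - b)) % m : ℕ) : ℤ) % (m : ℤ)
          = (((j + a + (m - b)) : ℕ) : ℤ) % m := by
        rw [Int.natCast_mod, Int.emod_emod_of_dvd _ dvd_rfl]
      have e2 : (((j + a + (m - b)) : ℕ) : ℤ) = ((j : ℤ) + a - b) + m := by
        push_cast [Nat.cast_sub hb]; ring
      rw [e1, e2]
      conv_rhs => rw [Int.add_emod, Int.emod_self, add_zero, Int.emod_emod_of_dvd _ dvd_rfl])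
  rw [harg]
  exact Prod.ext hcongr.1 (Prod.ext hcongr.2 rfl)

/-- Counting measure on the vertex set of a regular `m`-gon on `S¹ × {0}` is uniformly
distributed on `(ℍ¹, d_H)`: balls of a common radius centered at points of the set contain
the same number of points of the set. -/
theorem statement15 (m : ℕ) (hm : 1 ≤ m) (φ : ℝ) :
    ∀ x ∈ polygonA m φ, ∀ y ∈ polygonA m φ, ∀ r : ℝ, 0 < r →
      (polygonA m φ ∩ ball1 x r).ncard = (polygonA m φ ∩ ball1 y r).ncard := by
  rintro x ⟨k, hk, rfl⟩ y ⟨l, hl, rfl⟩ r hr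
  set x : H1 := (Real.cos (2 * Real.pi * k / m + φ), Real.sin (2 * Real.pi * k / m + φ), 0)
  set y : H1 := (Real.cos (2 * Real.pi * l / m + φ), Real.sin (2 * Real.pi * l / m + φ), 0)
  set θ : ℝ := 2 * Real.pi * l / m - 2 * Real.pi * k / m with hθ
  have hxy : rot1 θ x = y := by
    show rot1 θ (Real.cos _, Real.sin _, (0:ℝ)) = _
    rw [rot1_point]
    have : θ + (2 * Real.pi * k / m + φ) = 2 * Real.pi * l / m + φ := by rw [hθ]; ring
    rw [this]
  have hnegθ : -θ = 2 * Real.pi * k / m - 2 * Real.pi * l / m := by rw [hθ]; ring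
  have hback : ∀ p : H1, rot1 θ (rot1 (-θ) p) = p := by
    intro p
    rw [rot1_rot1, add_neg_cancel, rot1_zero]
  have hback' : ∀ p : H1, rot1 (-θ) (rot1 θ p) = p := by
    intro p
    rw [rot1_rot1, neg_add_cancel, rot1_zero]
  have himg : rot1 θ '' (polygonA m φ ∩ ball1 x r) = polygonA m φ ∩ ball1 y r := by
    ext q
    constructor
    · rintro ⟨p, ⟨hpA, hpB⟩, rfl⟩
      refine ⟨?_, ?_⟩
      · rw [hθ]; exact rot1_mem m hm φ l k hk.le p hpA
      · show dH1 y (rot1 θ p) ≤ r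
        rw [← hxy, rot1_dH]
        exact hpB
    · rintro ⟨hqA, hqB⟩
      refine ⟨rot1 (-θ) q, ⟨?_, ?_⟩, hback q⟩
      · rw [hnegθ]; exact rot1_mem m hm φ k l hl.le q hqA
      · show dH1 x (rot1 (-θ) q) ≤ r
        have : x = rot1 (-θ) y := by rw [← hxy, hback']
        rw [this, rot1_dH]
        exact hqB
  rw [← himg, Set.ncard_image_of_injective _ (rot1_injective θ)]
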